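/- Let Γ₀ = (𝒱₀, ℰ₀) be an infinite connected locally finite undirected simple graph. Suppose there exist finite connected subsets Ω_k ⊆ 𝒱₀ with Ω_k ⊆ Ω_{k+1} and ∪_{k} Ω_k = 𝒱₀ such that, for every k, the finite graph with interior Ω_k, boundary ∂_{Γ₀}Ω_k, and the edges of Γ₀ among Ω_k ∪ ∂_{Γ₀}Ω_k, satisfies conditions (C-1) and (C-2). Then the unique continuation from infinity holds: for every λ ∈ ℂ, every u : 𝒱₀ → ℂ with finite support satisfying (−Δ_{Γ₀} − λ)u(v) = 0 for all v ∈ 𝒱₀ vanishes identically. -/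
import Mathlib


open scoped Classical

/-- The degree of a vertex, for an adjacency relation. -/
noncomputable def vdeg {V : Type} (adj : V → V → Prop) (x : V) : ℕ :=
  Nat.card {y : V // adj x y}

/-- The graph Laplacian `(Δu)(v) = (1/deg v) Σ_{w ∼ v} u(w)` for an adjacency relation. -/
noncomputable def glap {V : Type} (adj : V → V → Prop) (u : V → ℂ) (x : V) : ℂ :=
  ((vdeg adj x : ℂ))⁻¹ * ∑' y : {y : V // adj x y}, u y.1

/-- The boundary of a set `Ω` of vertices: the vertices outside `Ω` adjacent to `Ω`. -/
def bdryOf {V : Type} (adj : V → V → Prop) (Ω : Set V) : Set V :=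
  {v | v ∉ Ω ∧ ∃ w ∈ Ω, adj v w}

/-- Walks of a given length staying inside the set `A`. -/
def walkIn {V : Type} (adj : V → V → Prop) (A : Set V) : ℕ → V → V → Prop
  | 0, x, y => x = y
  | n + 1, x, y => ∃ z ∈ A, adj x z ∧ walkIn adj A n z y

/-- The graph distance inside the set `A`. -/
noncomputable def distIn {V : Type} (adj : V → V → Prop) (A : Set V) (x y : V) : ℕ :=
  sInf {n | walkIn adj A n x y}

/-- Condition (C-1) for the finite graph with interior `Ω`, boundary `B` and adjacency `adj`
restricted to `Ω ∪ B`: every boundary vertex is adjacent to exactly one vertex of the graph,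
and this vertex lies in the interior. -/
def SubC1 {V : Type} (adj : V → V → Prop) (Ω B : Set V) : Prop :=
  ∀ z ∈ B, (∃! x, x ∈ Ω ∪ B ∧ adj z x) ∧ ∀ x ∈ Ω ∪ B, adj z x → x ∈ Ω

/-- `x₀` is an extreme point of `S` with respect to the boundary `B`, inside the finite graph
with vertex set `Ω ∪ B`. -/
def SubExtreme {V : Type} (adj : V → V → Prop) (Ω B S : Set V) (x₀ : V) : Prop :=
  x₀ ∈ S ∧ ∃ z ∈ B, ∀ x ∈ S, x ≠ x₀ →
    distIn adj (Ω ∪ B) x₀ z < distIn adj (Ω ∪ B) x z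

/-- Condition (C-2) (two-points condition) for the finite graph with interior `Ω`, boundary `B`
and adjacency `adj` restricted to `Ω ∪ B`. -/
def SubC2 {V : Type} (adj : V → V → Prop) (Ω B : Set V) : Prop :=
  ∀ S : Set V, S ⊆ Ω → 2 ≤ S.ncard →
    ∃ x₀ x₁, x₀ ≠ x₁ ∧ SubExtreme adj Ω B S x₀ ∧ SubExtreme adj Ω B S x₁

/-- Connectedness of the graph with vertex set `A` and adjacency `adj` restricted to `A`. -/
def ConnIn {V : Type} (adj : V → V → Prop) (A : Set V) : Prop :=
  ∀ x ∈ A, ∀ y ∈ A, ∃ n, walkIn adj A n x y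
lemma walkIn_mono {V : Type} {adj : V → V → Prop} {A A' : Set V} (h : A ⊆ A') :
    ∀ {n : ℕ} {x y : V}, walkIn adj A n x y → walkIn adj A' n x y
  | 0, _, _, hw => hw
  | n + 1, _, _, ⟨z, hz, hxz, hw⟩ => ⟨z, h hz, hxz, walkIn_mono h hw⟩

lemma walkIn_append {V : Type} {adj : V → V → Prop} {A : Set V} :
    ∀ {n : ℕ} {x y z : V}, walkIn adj A n x y → adj y z → z ∈ A →
      walkIn adj A (n + 1) x z
  | 0, x, y, z, hw, hyz, hz => by
      cases hw; exact ⟨z, hz, hyz, rfl⟩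
  | n + 1, x, y, z, ⟨w, hw, hxw, hwy⟩, hyz, hz =>
      ⟨w, hw, hxw, walkIn_append hwy hyz hz⟩

lemma distIn_le {V : Type} {adj : V → V → Prop} {A : Set V} {n : ℕ} {x y : V}
    (h : walkIn adj A n x y) : distIn adj A x y ≤ n :=
  Nat.sInf_le h

lemma walkIn_distIn {V : Type} {adj : V → V → Prop} {A : Set V} {x y : V}
    (h : ∃ n, walkIn adj A n x y) : walkIn adj A (distIn adj A x y) x y :=
  Nat.sInf_mem h

/-- Key evaluation lemma: if `u v = 0`, `x₀` is a neighbor of `v` and the only neighbor of `v`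
where `u` could be nonzero, then `u x₀ = 0`. -/
lemma eval_zero {V : Type} (adj : V → V → Prop) (hlf : ∀ x, {y : V | adj x y}.Finite)
    (u : V → ℂ) (lam : ℂ) (heq : ∀ v, -(glap adj u v) - lam * u v = 0)
    (v x₀ : V) (hv : u v = 0) (hadj : adj v x₀)
    (huniq : ∀ w, adj v w → u w ≠ 0 → w = x₀) : u x₀ = 0 := by
  haveI : Fintype {y : V // adj v y} := (hlf v).fintype
  haveI : Nonempty {y : V // adj v y} := ⟨⟨x₀, hadj⟩⟩
  have hglap : glap adj u v = 0 := by
    have h := heq v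
    rw [hv, mul_zero, sub_zero, neg_eq_zero] at h
    exact h
  have hd : (vdeg adj v : ℂ) ≠ 0 := by
    have : vdeg adj v ≠ 0 := by
      rw [vdeg, Nat.card_eq_fintype_card]
      exact Fintype.card_ne_zero
    exact_mod_cast this
  have hsum : ∑' y : {y : V // adj v y}, u y.1 = 0 := by
    rcases mul_eq_zero.mp hglap with h | h
    · exact absurd h (inv_ne_zero hd)
    · exact h
  rw [tsum_fintype] at hsum
  have hsingle : ∑ y : {y : V // adj v y}, u y.1 = u x₀ := by
    refine Finset.sum_eq_single_of_mem (⟨x₀, hadj⟩ : {y : V // adj v y}) (Finset.mem_univ _) ?_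
    intro b _ hb
    by_contra h
    exact hb (Subtype.ext (huniq b.1 b.2 h))
  rw [hsingle] at hsum
  exact hsum

/-- If an infinite connected locally finite graph is exhausted by finite
connected subsets `Ω_k` such that each finite graph `(Ω_k, ∂Ω_k)` satisfies (C-1) and (C-2),
then the unique continuation from infinity holds: any finitely supported solution of
`(−Δ − λ)u = 0` vanishes identically. -/
theorem stmt11 {V : Type} [Infinite V]
    (adj : V → V → Prop)
    (hsymm : ∀ {x y}, adj x y → adj y x)
    (hirr : ∀ x, ¬ adj x x)
    (hlf : ∀ x, {y : V | adj x y}.Finite)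
    (hconn : ∀ x y : V, Relation.ReflTransGen adj x y)
    (Ω : ℕ → Set V)
    (hfin : ∀ k, (Ω k).Finite)
    (hΩconn : ∀ k, ConnIn adj (Ω k))
    (hmono : ∀ k, Ω k ⊆ Ω (k + 1))
    (hcover : ∀ v, ∃ k, v ∈ Ω k)
    (hC1 : ∀ k, SubC1 adj (Ω k) (bdryOf adj (Ω k)))
    (hC2 : ∀ k, SubC2 adj (Ω k) (bdryOf adj (Ω k))) :
    ∀ (lam : ℂ) (u : V → ℂ), (Function.support u).Finite →
      (∀ v, -(glap adj u v) - lam * u v = 0) → ∀ v, u v = 0 := by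
  intro lam u hfs heq
  by_contra hcon
  push_neg at hcon
  obtain ⟨v₀, hv₀⟩ := hcon
  set S : Set V := Function.support u with hSdef
  have hSne : S.Nonempty := ⟨v₀, hv₀⟩
  have hmono' : ∀ k m, k ≤ m → Ω k ⊆ Ω m := by
    intro k m h
    induction h with
    | refl => exact subset_rfl
    | step _ ih => exact ih.trans (hmono _)
  have h1le : 1 ≤ S.ncard := by
    rw [Nat.one_le_iff_ne_zero]
    intro h
    rw [Set.ncard_eq_zero hfs] at h
    exact hSne.ne_empty h
  rcases eq_or_lt_of_le h1le with h1 | h2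
  · -- singleton support case
    obtain ⟨x, hx⟩ := (Set.ncard_eq_one).mp h1.symm
    have hux : u x ≠ 0 := by
      have : x ∈ S := hx ▸ rfl
      exact this
    obtain ⟨y, hy⟩ := exists_ne x
    rcases (hconn x y).cases_head with h | ⟨c, hxc, _⟩
    · exact hy h.symm
    · have hcx : c ≠ x := by rintro rfl; exact hirr _ hxc
      have hc0 : u c = 0 := by
        by_contra h
        have : c ∈ S := h
        rw [hx] at this
        exact hcx this
      have := eval_zero adj hlf u lam heq c x hc0 (hsymm hxc)
        (fun w hw hwne => by
          have : w ∈ S := hwne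
          rw [hx] at this
          exact this)
      exact hux this
  · -- #S ≥ 2 case
    -- find k with S ⊆ Ω k
    have hsub : ∃ k, S ⊆ Ω k := by
      refine ⟨hfs.toFinset.sup (fun v => Nat.find (hcover v)), fun v hv => ?_⟩
      exact hmono' _ _ (Finset.le_sup (by simpa using hv)) (Nat.find_spec (hcover v))
    obtain ⟨k, hk⟩ := hsub
    obtain ⟨x₀, x₁, hne, ⟨hx₀S, z, hzB, hext⟩, -⟩ := hC2 k S hk h2
    obtain ⟨hzΩ, w, hwΩ, hzw⟩ := hzB
    set A : Set V := Ω k ∪ bdryOf adj (Ω k) with hAdef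
    have hzA : z ∈ A := Or.inr ⟨hzΩ, w, hwΩ, hzw⟩
    -- walk from x₀ to z exists inside A
    have hex : ∃ n, walkIn adj A n x₀ z := by
      obtain ⟨n, hn⟩ := hΩconn k x₀ (hk hx₀S) w hwΩ
      exact ⟨n + 1, walkIn_append (walkIn_mono Set.subset_union_left hn) (hsymm hzw) hzA⟩
    set N := distIn adj A x₀ z with hNdef
    have hNwalk : walkIn adj A N x₀ z := walkIn_distIn hex
    have hNpos : N ≠ 0 := by
      intro h
      rw [h] at hNwalk
      exact hzΩ (hNwalk ▸ hk hx₀S)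
    obtain ⟨m, hm⟩ := Nat.exists_eq_succ_of_ne_zero hNpos
    rw [hm] at hNwalk
    obtain ⟨v, hvA, hadjx₀v, hwvz⟩ := hNwalk
    have hdv : distIn adj A v z ≤ m := distIn_le hwvz
    have hv0 : u v = 0 := by
      by_contra h
      have hvS : v ∈ S := h
      rcases eq_or_ne v x₀ with rfl | hvne
      · exact hirr v hadjx₀v
      · have := hext v hvS hvne
        omega
    have huniq : ∀ ww, adj v ww → u ww ≠ 0 → ww = x₀ := by
      intro ww hvww hww
      have hwwS : ww ∈ S := hww
      by_contra hwwne
      have h1 : walkIn adj A (m + 1) ww z := ⟨v, hvA, hsymm hvww, hwvz⟩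
      have h2' : distIn adj A ww z ≤ m + 1 := distIn_le h1
      have := hext ww hwwS hwwne
      omega
    have := eval_zero adj hlf u lam heq v x₀ hv0 (hsymm hadjx₀v) huniq
    exact hx₀S this
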